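/- arXiv:1802.04148 — 3 statements merged into one kernel-verified Lean document; each statement's English description precedes it below -/
import Mathlib

section
/- Let Z = {S_1,...,S_m} be a zipper on a complete metric space X with vertices z_0,...,z_m and signature ε. Then the attractor K of Z is a connected compact set containing all the vertices z_0,...,z_m. -/
/-!
The two outer vertices `z 0`, `z m` are each the image of one of them under some `S i`, and
`S i` contracts the distance to `K`; so the larger of their two distances to `K` is contracted,
hence zero. Every other vertex `z j` lies in `S j (K)`.

For connectedness, call `K` `e`-chain connected when any two of its points are joined by a chain
in `K` with steps of length at most `e`. If `K` is `e`-chain connected, each piece `S i (K)` is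
`ρ e`-chain connected (`ρ < 1` a common Lipschitz constant), and consecutive pieces meet in a
vertex, so `K` is `ρ e`-chain connected. Starting from `e = diam K`, `K` is `e`-chain connected
for every `e > 0`, and a compact set with this property is connected.
-/

open Metric Set

open scoped NNReal

lemma Set.mapsTo_of_eq_iUnion_image {X ι : Type*} {S : ι → X → X} {K : Set X}
    (hK : K = ⋃ i, S i '' K) (i : ι) : MapsTo (S i) K K := by
  intro x hx
  rw [hK]
  exact mem_iUnion.2 ⟨i, mem_image_of_mem _ hx⟩

lemma zipper_vertices_mem_image {X : Type*} {m : ℕ} {S : Fin m → X → X} {z : ℕ → X}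
    {ε : Fin m → ℕ} (hε : ∀ i, ε i ≤ 1)
    (hz0 : ∀ i : Fin m, S i (z 0) = z (i.1 + ε i))
    (hzm : ∀ i : Fin m, S i (z m) = z (i.1 + 1 - ε i)) (i : Fin m) :
    z i ∈ S i '' {z 0, z m} ∧ z (i + 1) ∈ S i '' {z 0, z m} := by
  rcases Nat.le_one_iff_eq_zero_or_eq_one.1 (hε i) with h | h
  · exact ⟨⟨z 0, by simp, by simp [hz0, h]⟩, ⟨z m, by simp, by simp [hzm, h]⟩⟩
  · exact ⟨⟨z m, by simp, by simp [hzm, h]⟩, ⟨z 0, by simp, by simp [hz0, h]⟩⟩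

section Contractions

variable {X : Type*} [MetricSpace X]

lemma LipschitzWith.infDist_le_mul_of_mapsTo {c : ℝ≥0} {f : X → X} (hf : LipschitzWith c f)
    {K : Set X} (hK : MapsTo f K K) (x : X) : infDist (f x) K ≤ c * infDist x K := by
  rcases K.eq_empty_or_nonempty with rfl | hne
  · simp
  have : Nonempty K := hne.to_subtype
  calc infDist (f x) K ≤ ⨅ y : K, c * dist x y :=
        le_ciInf fun y => (infDist_le_dist_of_mem (hK y.2)).trans (hf.dist_le_mul x y)
    _ = c * infDist x K := by
        rw [infDist_eq_iInf]; exact (Real.mul_iInf_of_nonneg c.2 _).symm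

lemma Set.Finite.subset_of_subset_iUnion_image {ι : Type*} {S : ι → X → X} {c : ι → ℝ≥0}
    (hS : ∀ i, ContractingWith (c i) (S i)) {K : Set X} (hKc : IsClosed K) (hKne : K.Nonempty)
    (hK : ∀ i, MapsTo (S i) K K) {F : Set X} (hF : F.Finite) (hFS : F ⊆ ⋃ i, S i '' F) :
    F ⊆ K := by
  rcases F.eq_empty_or_nonempty with rfl | hFne
  · exact empty_subset K
  obtain ⟨x, hxF, hmax⟩ := Set.exists_max_image F (infDist · K) hF hFne
  obtain ⟨i, y, hyF, rfl⟩ : ∃ i, ∃ y ∈ F, S i y = x := by simpa using hFS hxF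
  have hx0 : infDist (S i y) K = 0 := by
    have hle := ((hS i).2.infDist_le_mul_of_mapsTo (hK i) y).trans
      (mul_le_mul_of_nonneg_left (hmax y hyF) (c i).2)
    have hc : (c i : ℝ) < 1 := (hS i).1
    nlinarith [infDist_nonneg (x := S i y) (s := K)]
  intro w hw
  exact (hKc.mem_iff_infDist_zero hKne).2 (le_antisymm (hx0 ▸ hmax w hw) infDist_nonneg)

lemma exists_lipschitzWith_lt_one_of_contractingWith {ι : Type*} [Finite ι] {T : ι → X → X}
    {c : ι → ℝ≥0} (hT : ∀ i, ContractingWith (c i) (T i)) :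
    ∃ ρ < 1, ∀ i, LipschitzWith ρ (T i) := by
  cases nonempty_fintype ι
  refine ⟨Finset.univ.sup c, (Finset.sup_lt_iff zero_lt_one).2 fun i _ => (hT i).1, fun i => ?_⟩
  exact (hT i).2.weaken (Finset.le_sup (Finset.mem_univ i))

end Contractions

section Chains

variable {X : Type*} [MetricSpace X]

def ChainIn (K : Set X) (e : ℝ) : X → X → Prop :=
  Relation.ReflTransGen fun a b => a ∈ K ∧ b ∈ K ∧ dist a b ≤ e

def IsChainConnected (K : Set X) (e : ℝ) : Prop :=
  ∀ x ∈ K, ∀ y ∈ K, ChainIn K e x y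

variable {K L : Set X} {e e' : ℝ} {x y : X}

lemma ChainIn.symm (h : ChainIn K e x y) : ChainIn K e y x :=
  Relation.ReflTransGen.mono (r := fun a b => b ∈ K ∧ a ∈ K ∧ dist b a ≤ e)
    (fun a b ⟨ha, hb, hd⟩ => ⟨hb, ha, dist_comm a b ▸ hd⟩) _ _ (Relation.ReflTransGen.swap _ _ h)

lemma ChainIn.image {c : ℝ≥0} {f : X → X} (hf : LipschitzWith c f) (hfK : MapsTo f K L)
    (h : ChainIn K e x y) : ChainIn L (c * e) (f x) (f y) := by
  induction h with
  | refl => exact .refl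
  | tail _ hstep ih =>
    obtain ⟨ha, hb, hd⟩ := hstep
    exact ih.tail ⟨hfK ha, hfK hb,
      (hf.dist_le_mul _ _).trans (mul_le_mul_of_nonneg_left hd c.2)⟩

lemma IsChainConnected.mono (h : IsChainConnected K e) (hee' : e ≤ e') :
    IsChainConnected K e' := fun x hx y hy =>
  Relation.ReflTransGen.mono (fun _ _ ⟨ha, hb, hd⟩ => ⟨ha, hb, hd.trans hee'⟩) _ _ (h x hx y hy)

lemma Bornology.IsBounded.isChainConnected_diam (hK : Bornology.IsBounded K) :
    IsChainConnected K (diam K) := fun _ hx _ hy =>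
  .single ⟨hx, hy, dist_le_diam_of_mem hK hx hy⟩

lemma Bornology.IsBounded.isChainConnected_of_mul {ρ : ℝ} (hK : Bornology.IsBounded K)
    (hρ0 : 0 ≤ ρ) (hρ1 : ρ < 1) (h : ∀ e, IsChainConnected K e → IsChainConnected K (ρ * e))
    (he : 0 < e) : IsChainConnected K e := by
  have hpow : ∀ n : ℕ, IsChainConnected K (ρ ^ n * diam K) := by
    intro n
    induction n with
    | zero => simpa using hK.isChainConnected_diam
    | succ n ih => simpa [pow_succ', mul_assoc] using h _ ih
  have htend : Filter.Tendsto (fun n : ℕ => ρ ^ n * diam K) Filter.atTop (nhds 0) := by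
    simpa using (tendsto_pow_atTop_nhds_zero_of_lt_one hρ0 hρ1).mul_const (diam K)
  obtain ⟨n, hn⟩ := (htend.eventually (eventually_lt_nhds he)).exists
  exact (hpow n).mono hn.le

/-- A separation of `K` into disjoint closed pieces has a positive gap, which no chain with
shorter steps can cross. -/
lemma IsCompact.isPreconnected_of_isChainConnected (hK : IsCompact K)
    (h : ∀ e > 0, IsChainConnected K e) : IsPreconnected K := by
  refine (isPreconnected_iff_subset_of_fully_disjoint_closed hK.isClosed).2 ?_
  intro u v hu hv hKuv huv
  rcases (K ∩ u).eq_empty_or_nonempty with hKu | ⟨x, hxK, hxu⟩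
  · exact .inr fun y hy => (hKuv hy).resolve_left fun hyu => hKu.subset ⟨hy, hyu⟩
  obtain ⟨r, hr0, hr⟩ := exists_pos_forall_lt_edist (hK.inter_right hu) hv
    (huv.mono_left inter_subset_right)
  refine .inl fun y hy => ?_
  induction h r hr0 x hxK y hy with
  | refl => exact hxu
  | tail _ hstep ih =>
    obtain ⟨ha, hb, hd⟩ := hstep
    refine (hKuv hb).resolve_right fun hbv => (hr _ ⟨ha, ih ha⟩ _ hbv).not_ge ?_
    exact edist_le_coe.2 (by exact_mod_cast hd)

end Chains

section Zipper

variable {X : Type*} [MetricSpace X] {m : ℕ} {S : Fin m → X → X}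

lemma isChainConnected_mul_of_mem_image {K : Set X} {z : ℕ → X} {ρ : ℝ≥0} {e : ℝ}
    (hS : ∀ i, LipschitzWith ρ (S i)) (hK : K = ⋃ i, S i '' K)
    (hz : ∀ i : Fin m, z i ∈ S i '' K ∧ z (i + 1) ∈ S i '' K) (he : IsChainConnected K e) :
    IsChainConnected K (ρ * e) := by
  have hmaps := mapsTo_of_eq_iUnion_image hK
  have hpiece : ∀ i, ∀ x ∈ S i '' K, ∀ y ∈ S i '' K, ChainIn K (ρ * e) x y := by
    rintro i _ ⟨x, hx, rfl⟩ _ ⟨y, hy, rfl⟩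
    exact (he x hx y hy).image (hS i) (hmaps i)
  have hvert : ∀ j ≤ m, ChainIn K (ρ * e) (z 0) (z j) := by
    intro j hj
    induction j with
    | zero => exact .refl
    | succ j ih =>
      have hz' := hz ⟨j, hj⟩
      exact (ih (by omega)).trans (hpiece _ _ hz'.1 _ hz'.2)
  have hbase : ∀ x ∈ K, ChainIn K (ρ * e) x (z 0) := by
    intro x hx
    rw [hK, mem_iUnion] at hx
    obtain ⟨i, hx⟩ := hx
    exact (hpiece i x hx _ (hz i).1).trans (hvert i i.2.le).symm
  exact fun x hx y hy => (hbase x hx).trans (hbase y hy).symm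

end Zipper

theorem stmt10_general {X : Type*} [MetricSpace X]
    {m : ℕ} (hm : 1 ≤ m) (S : Fin m → X → X) (r : Fin m → ℝ)
    (hr : ∀ i, r i < 1) (hr0 : ∀ i, 0 ≤ r i)
    (hS : ∀ i, LipschitzWith ⟨r i, hr0 i⟩ (S i))
    (z : ℕ → X) (ε : Fin m → ℕ) (hε : ∀ i, ε i ≤ 1)
    (hz0 : ∀ i : Fin m, S i (z 0) = z (i.1 + ε i))
    (hzm : ∀ i : Fin m, S i (z m) = z (i.1 + 1 - ε i))
    (K : Set X) (hKne : K.Nonempty) (hKc : IsCompact K)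
    (hK : K = ⋃ i, S i '' K) :
    IsConnected K ∧ ∀ j : ℕ, j ≤ m → z j ∈ K := by
  have hcontr : ∀ i, ContractingWith ⟨r i, hr0 i⟩ (S i) := fun i => ⟨by exact_mod_cast hr i, hS i⟩
  have hmaps := mapsTo_of_eq_iUnion_image hK
  have hzS := zipper_vertices_mem_image hε hz0 hzm
  have hends : {z 0, z m} ⊆ K := by
    refine (toFinite _).subset_of_subset_iUnion_image hcontr hKc.isClosed hKne hmaps ?_
    rintro _ (rfl | rfl)
    · exact mem_iUnion.2 ⟨⟨0, hm⟩, (hzS ⟨0, hm⟩).1⟩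
    · have hlast := (hzS ⟨m - 1, by omega⟩).2
      rw [Nat.sub_add_cancel hm] at hlast
      exact mem_iUnion.2 ⟨_, hlast⟩
  have hzK : ∀ i : Fin m, z i ∈ S i '' K ∧ z (i + 1) ∈ S i '' K := fun i =>
    ⟨image_mono hends (hzS i).1, image_mono hends (hzS i).2⟩
  refine ⟨⟨hKne, hKc.isPreconnected_of_isChainConnected fun e he => ?_⟩, fun j hj => ?_⟩
  · obtain ⟨ρ, hρ, hSρ⟩ := exists_lipschitzWith_lt_one_of_contractingWith hcontr
    exact hKc.isBounded.isChainConnected_of_mul ρ.2 hρ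
      (fun _ => isChainConnected_mul_of_mem_image hSρ hK hzK) he
  · rcases hj.lt_or_eq with hj | rfl
    · exact image_subset_iff.2 (hmaps ⟨j, hj⟩) (hzK ⟨j, hj⟩).1
    · exact hends (by simp)

/-- The attractor of a zipper on a complete metric space is a
connected compact set containing all the vertices `z_0, ..., z_m`.
Here `i : Fin m` stands for the map `S_{i+1}` of the paper, so that the zipper
conditions read `S_{i+1}(z_0) = z_{i + ε_{i+1}}`, `S_{i+1}(z_m) = z_{i+1-ε_{i+1}}`. -/
theorem stmt10 {X : Type*} [MetricSpace X] [CompleteSpace X]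
    {m : ℕ} (hm : 1 ≤ m) (S : Fin m → X → X) (r : Fin m → ℝ)
    (hr : ∀ i, r i < 1) (hr0 : ∀ i, 0 ≤ r i)
    (hS : ∀ i, LipschitzWith ⟨r i, hr0 i⟩ (S i))
    (z : ℕ → X) (ε : Fin m → ℕ) (hε : ∀ i, ε i ≤ 1)
    (hz0 : ∀ i : Fin m, S i (z 0) = z (i.1 + ε i))
    (hzm : ∀ i : Fin m, S i (z m) = z (i.1 + 1 - ε i))
    (K : Set X) (hKne : K.Nonempty) (hKc : IsCompact K)
    (hK : K = ⋃ i, S i '' K) :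
    IsConnected K ∧ ∀ j : ℕ, j ≤ m → z j ∈ K :=
  stmt10_general hm S r hr hr0 hS z ε hε hz0 hzm K hKne hKc hK
end

section
/- Let D be a dendrite, and let A_1,...,A_n ∈ D. Let γ̂ = ⋃_{i<j} γ_{ij}, where γ_{ij} is the unique arc in D joining A_i and A_j. Then for any point x ∈ γ̂, γ̂ = ⋃_{j=1}^n γ_{A_j x}, where γ_{A_j x} is the unique arc joining A_j and x. -/
open unitInterval

/-- `A` is an arc in `X` from `a` to `b`. -/
def IsArc {X : Type*} [TopologicalSpace X] (A : Set X) (a b : X) : Prop :=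
  ∃ φ : I → X, Continuous φ ∧ Function.Injective φ ∧
    Set.range φ = A ∧ φ 0 = a ∧ φ 1 = b

namespace Stmt15Aux

/-- scaling map `u ↦ t * u` on the unit interval -/
noncomputable def scaleMap (t : I) (u : I) : I := t * u

lemma scaleMap_coe (t u : I) : (scaleMap t u : ℝ) = t * u := rfl

lemma continuous_scaleMap (t : I) : Continuous (scaleMap t) := by
  apply Continuous.subtype_mk
  exact continuous_const.mul continuous_subtype_val

lemma scaleMap_injective {t : I} (ht : t ≠ 0) : Function.Injective (scaleMap t) := by
  intro u v h
  have ht' : (t:ℝ) ≠ 0 := fun h' => ht (Subtype.ext h')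
  have : (t:ℝ) * u = (t:ℝ) * v := congrArg Subtype.val h
  exact Subtype.ext (mul_left_cancel₀ ht' this)

lemma scaleMap_zero (t : I) : scaleMap t 0 = 0 := by
  apply Subtype.ext; simp [scaleMap_coe]

lemma scaleMap_one (t : I) : scaleMap t 1 = t := by
  apply Subtype.ext; simp [scaleMap_coe]

lemma scaleMap_le (t u : I) : (scaleMap t u : ℝ) ≤ t := by
  rw [scaleMap_coe]
  calc (t:ℝ) * u ≤ (t:ℝ) * 1 := by
        apply mul_le_mul_of_nonneg_left u.2.2 t.2.1
    _ = t := mul_one _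

/-- tail map `u ↦ s + (1-s) * u` on the unit interval -/
noncomputable def tailMap (s : I) (u : I) : I :=
  ⟨(s : ℝ) + (1 - s) * u, by
    constructor
    · have h1 : (0:ℝ) ≤ 1 - s := by linarith [s.2.2]
      have := mul_nonneg h1 u.2.1
      linarith [s.2.1]
    · have h1 : (0:ℝ) ≤ 1 - s := by linarith [s.2.2]
      have : (1 - (s:ℝ)) * u ≤ (1 - s) * 1 := mul_le_mul_of_nonneg_left u.2.2 h1
      linarith⟩

lemma tailMap_coe (s u : I) : (tailMap s u : ℝ) = s + (1 - s) * u := rfl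

lemma continuous_tailMap (s : I) : Continuous (tailMap s) := by
  apply Continuous.subtype_mk
  exact continuous_const.add (continuous_const.mul continuous_subtype_val)

lemma tailMap_injective {s : I} (hs : s ≠ 1) : Function.Injective (tailMap s) := by
  intro u v h
  have hs' : (1:ℝ) - s ≠ 0 := by
    intro h'
    exact hs (Subtype.ext (by linarith [congrArg id h'] : (s:ℝ) = 1))
  have : (s:ℝ) + (1 - s) * u = (s:ℝ) + (1 - s) * v := congrArg Subtype.val h
  have : (1 - (s:ℝ)) * u = (1 - s) * v := by linarith
  exact Subtype.ext (mul_left_cancel₀ hs' this)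

lemma tailMap_zero (s : I) : tailMap s 0 = s := by
  apply Subtype.ext; simp [tailMap_coe]

lemma tailMap_one (s : I) : tailMap s 1 = 1 := by
  apply Subtype.ext; simp [tailMap_coe]

section

variable {D : Type*} [TopologicalSpace D] [T2Space D]
  (arc : D → D → Set D)
  (harc : ∀ a b : D, a ≠ b → IsArc (arc a b) a b)
  (harc_uniq : ∀ (a b : D) (A : Set D), a ≠ b → IsArc A a b → A = arc a b)
  (harc_refl : ∀ a : D, arc a a = {a})

include harc harc_refl in
lemma mem_arc_left (a b : D) : a ∈ arc a b := by
  by_cases h : a = b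
  · subst h; rw [harc_refl]; exact rfl
  · obtain ⟨φ, hc, hi, hr, h0, h1⟩ := harc a b h
    rw [← hr, ← h0]; exact Set.mem_range_self _

include harc harc_uniq harc_refl in
lemma arc_symm (a b : D) : arc a b = arc b a := by
  by_cases h : a = b
  · subst h; rfl
  · obtain ⟨φ, hc, hi, hr, h0, h1⟩ := harc a b h
    apply harc_uniq b a _ (Ne.symm h)
    refine ⟨φ ∘ unitInterval.symm, hc.comp continuous_symm,
      hi.comp (fun u v huv => ?_), ?_, ?_, ?_⟩
    · have := congrArg unitInterval.symm huv
      simpa using this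
    · rw [← hr]
      apply Set.eq_of_subset_of_subset
      · exact Set.range_comp_subset_range _ _
      · rintro y ⟨u, rfl⟩
        exact ⟨unitInterval.symm u, by simp [Function.comp]⟩
    · simpa using h1
    · simpa using h0

include harc harc_uniq harc_refl in
lemma arc_subset (a b x : D) (hx : x ∈ arc a b) : arc a x ⊆ arc a b := by
  by_cases hab : a = b
  · subst hab
    rw [harc_refl] at hx
    rw [hx, harc_refl]
  by_cases hax : a = x
  · rw [← hax, harc_refl]
    intro y hy
    rw [hy]
    exact mem_arc_left arc harc harc_refl a b
  obtain ⟨φ, hc, hi, hr, h0, h1⟩ := harc a b hab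
  rw [← hr] at hx
  obtain ⟨t, ht⟩ := hx
  have ht0 : t ≠ 0 := by
    intro h
    apply hax
    rw [← h0, ← ht, h]
  have : arc a x = Set.range (φ ∘ scaleMap t) := by
    symm
    apply harc_uniq a x _ hax
    refine ⟨φ ∘ scaleMap t, hc.comp (continuous_scaleMap t),
      hi.comp (scaleMap_injective ht0), rfl, ?_, ?_⟩
    · simp [Function.comp, scaleMap_zero, h0]
    · simp [Function.comp, scaleMap_one, ht]
  rw [this, ← hr]
  exact Set.range_comp_subset_range _ _

include harc harc_uniq harc_refl in
lemma arc_triangle [CompactSpace D] (a b c : D) : arc a c ⊆ arc a b ∪ arc b c := by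
  by_cases hab : a = b
  · subst hab; exact Set.subset_union_right
  by_cases hbc : b = c
  · subst hbc; exact Set.subset_union_left
  by_cases hac : a = c
  · subst hac
    rw [harc_refl]
    intro y hy
    rw [hy]
    exact Or.inl (mem_arc_left arc harc harc_refl a b)
  obtain ⟨φ, hφc, hφi, hφr, hφ0, hφ1⟩ := harc a b hab
  obtain ⟨ψ, hψc, hψi, hψr, hψ0, hψ1⟩ := harc b c hbc
  -- the set of parameters where φ meets range ψ
  set S : Set I := φ ⁻¹' (Set.range ψ) with hS
  have hScl : IsClosed S := ((isCompact_range hψc).isClosed).preimage hφc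
  have hSne : (1 : I) ∈ S := ⟨0, by rw [hψ0, hφ1]⟩
  -- project to ℝ to take the infimum
  set S' : Set ℝ := Subtype.val '' S with hS'
  have hS'cl : IsClosed S' :=
    ((hScl.isCompact).image continuous_subtype_val).isClosed
  have hS'ne : S'.Nonempty := ⟨((1:I):ℝ), ⟨1, hSne, rfl⟩⟩
  have hS'bdd : BddBelow S' := ⟨0, by rintro y ⟨⟨u, hu⟩, _, rfl⟩; exact hu.1⟩
  have hmem := hS'cl.csInf_mem hS'ne hS'bdd
  obtain ⟨t₀, ht₀S, ht₀v⟩ := hmem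
  have hmin : ∀ t : I, φ t ∈ Set.range ψ → t₀ ≤ t := by
    intro t ht
    apply Subtype.coe_le_coe.mp
    rw [ht₀v]
    exact csInf_le hS'bdd ⟨t, ht, rfl⟩
  obtain ⟨s₀, hs₀⟩ := ht₀S
  by_cases ht00 : t₀ = 0
  · -- a ∈ arc b c, so arc a c ⊆ arc b c
    have ha : a ∈ arc b c := by
      rw [← hψr]
      exact ⟨s₀, by rw [hs₀, ht00, hφ0]⟩
    have ha' : a ∈ arc c b := by
      rwa [← arc_symm arc harc harc_uniq harc_refl] 
    have := arc_subset arc harc harc_uniq harc_refl c b a ha'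
    rw [arc_symm arc harc harc_uniq harc_refl a c]
    rw [arc_symm arc harc harc_uniq harc_refl b c]
    exact this.trans Set.subset_union_right
  by_cases hs01 : s₀ = 1
  · -- c ∈ arc a b, so arc a c ⊆ arc a b
    have hc' : c ∈ arc a b := by
      rw [← hφr]
      exact ⟨t₀, by rw [← hs₀, hs01, hψ1]⟩
    exact (arc_subset arc harc harc_uniq harc_refl a b c hc').trans Set.subset_union_left
  -- main case: glue φ on [0, t₀] with ψ on [s₀, 1]
  have hpa : φ t₀ ≠ a := by
    intro h
    exact ht00 (hφi (by rw [hφ0, ← h]))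
  have ht0ne : (t₀:ℝ) ≠ 0 := fun h => ht00 (Subtype.ext h)
  have hs1ne : (1:ℝ) - s₀ ≠ 0 := by
    intro h
    exact hs01 (Subtype.ext (by linarith : (s₀:ℝ) = 1))
  set P1 : Path a (φ t₀) :=
    { toFun := φ ∘ scaleMap t₀
      continuous_toFun := hφc.comp (continuous_scaleMap t₀)
      source' := by simp [Function.comp, scaleMap_zero, hφ0]
      target' := by simp [Function.comp, scaleMap_one] } with hP1
  set P2 : Path (φ t₀) c :=
    { toFun := ψ ∘ tailMap s₀
      continuous_toFun := hψc.comp (continuous_tailMap s₀)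
      source' := by simp [Function.comp, tailMap_zero, hs₀]
      target' := by simp [Function.comp, tailMap_one, hψ1] } with hP2
  set sg := P1.trans P2 with hsg
  have hinj : Function.Injective (⇑sg) := by
    intro r r' h
    rw [hsg, Path.trans_apply, Path.trans_apply] at h
    split_ifs at h with h1 h2 h2
    · -- both in first half
      have h' := scaleMap_injective ht00 (hφi h)
      have h'' : (2*(r:ℝ)) = 2*(r':ℝ) := congrArg Subtype.val h'
      apply Subtype.ext
      linarith
    · -- first half meets second half: impossible
      exfalso
      have hge := hmin _ ⟨_, h.symm⟩
      have heq := le_antisymm (Subtype.coe_le_coe.mp (scaleMap_le t₀ _)) hge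
      have h2' := hψi (h.symm.trans ((congrArg φ (Subtype.ext heq)).trans hs₀.symm))
      have h3 : (s₀:ℝ) + (1 - s₀) * (2*(r':ℝ) - 1) = s₀ := congrArg Subtype.val h2'
      have h4 : (1 - (s₀:ℝ)) * (2*(r':ℝ) - 1) = 0 := by linarith
      have h5 := (mul_eq_zero.mp h4).resolve_left hs1ne
      exact h2 (by linarith)
    · -- second half meets first half: impossible
      exfalso
      have hge := hmin _ ⟨_, h⟩
      have heq := le_antisymm (Subtype.coe_le_coe.mp (scaleMap_le t₀ _)) hge
      have h2' := hψi (h.trans ((congrArg φ (Subtype.ext heq)).trans hs₀.symm))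
      have h3 : (s₀:ℝ) + (1 - s₀) * (2*(r:ℝ) - 1) = s₀ := congrArg Subtype.val h2'
      have h4 : (1 - (s₀:ℝ)) * (2*(r:ℝ) - 1) = 0 := by linarith
      have h5 := (mul_eq_zero.mp h4).resolve_left hs1ne
      exact h1 (by linarith)
    · -- both in second half
      have h' := tailMap_injective hs01 (hψi h)
      have h'' : (2*(r:ℝ) - 1) = 2*(r':ℝ) - 1 := congrArg Subtype.val h'
      apply Subtype.ext
      linarith
  have hrange : Set.range (⇑sg) ⊆ arc a b ∪ arc b c := by
    rw [hsg, Path.trans_range]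
    apply Set.union_subset
    · intro y hy
      left
      rw [← hφr]
      obtain ⟨u, hu⟩ := hy
      exact ⟨scaleMap t₀ u, hu⟩
    · intro y hy
      right
      rw [← hψr]
      obtain ⟨u, hu⟩ := hy
      exact ⟨tailMap s₀ u, hu⟩
  have harange : arc a c = Set.range (⇑sg) := by
    symm
    exact harc_uniq a c _ hac ⟨⇑sg, sg.continuous, hinj, rfl, sg.source, sg.target⟩
  rw [harange]
  exact hrange

end

end Stmt15Aux

/-- In a dendrite `D`, given points `A_1,...,A_n` and
`γ̂ = ⋃_{i<j} γ_{ij}` (the union of the arcs joining the pairs `A_i, A_j`), for any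
`x ∈ γ̂` one has `γ̂ = ⋃_j γ_{A_j x}`. -/
theorem stmt15 {D : Type*} [MetricSpace D] [CompactSpace D] [ConnectedSpace D]
    [LocallyConnectedSpace D]
    (hnocircle : ¬ ∃ f : Circle → D, Continuous f ∧ Function.Injective f)
    (arc : D → D → Set D)
    (harc : ∀ a b : D, a ≠ b → IsArc (arc a b) a b)
    (harc_uniq : ∀ (a b : D) (A : Set D), a ≠ b → IsArc A a b → A = arc a b)
    (harc_refl : ∀ a : D, arc a a = {a})
    (n : ℕ) (A : Fin n → D)
    (γhat : Set D) (hγhat : γhat = ⋃ (i : Fin n), ⋃ (j : Fin n), ⋃ (_ : i < j), arc (A i) (A j))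
    (x : D) (hx : x ∈ γhat) :
    γhat = ⋃ j : Fin n, arc (A j) x := by
  have symm := Stmt15Aux.arc_symm arc harc harc_uniq harc_refl
  have tri := Stmt15Aux.arc_triangle arc harc harc_uniq harc_refl
  have sub := Stmt15Aux.arc_subset arc harc harc_uniq harc_refl
  -- obtain the pair whose arc contains x
  rw [hγhat] at hx
  simp only [Set.mem_iUnion] at hx
  obtain ⟨p, q, hpq, hxpq⟩ := hx
  apply Set.eq_of_subset_of_subset
  · -- γhat ⊆ ⋃ j, arc (A j) x
    rw [hγhat]
    intro y hy
    simp only [Set.mem_iUnion] at hy ⊢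
    obtain ⟨i, k, hik, hy⟩ := hy
    have : y ∈ arc (A i) x ∪ arc x (A k) := tri (A i) x (A k) hy
    rcases this with h | h
    · exact ⟨i, h⟩
    · exact ⟨k, by rwa [symm (A k) x]⟩
  · -- ⋃ j, arc (A j) x ⊆ γhat
    intro y hy
    simp only [Set.mem_iUnion] at hy
    obtain ⟨j, hy⟩ := hy
    have hApx : arc (A p) x ⊆ γhat := by
      have h1 : arc (A p) x ⊆ arc (A p) (A q) := sub (A p) (A q) x hxpq
      rw [hγhat]
      intro z hz
      simp only [Set.mem_iUnion]
      exact ⟨p, q, hpq, h1 hz⟩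
    have hAjp : arc (A j) (A p) ⊆ γhat := by
      rcases lt_trichotomy j p with h | h | h
      · rw [hγhat]; intro z hz; simp only [Set.mem_iUnion]; exact ⟨j, p, h, hz⟩
      · subst h
        rw [harc_refl]
        intro z hz
        rw [Set.mem_singleton_iff] at hz
        subst hz
        exact hApx (Stmt15Aux.mem_arc_left arc harc harc_refl (A j) x)
      · rw [hγhat]; intro z hz; simp only [Set.mem_iUnion]
        exact ⟨p, j, h, by rwa [← symm (A j) (A p)]⟩
    have : y ∈ arc (A j) (A p) ∪ arc (A p) x := tri (A j) (A p) x hy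
    rcases this with h | h
    · exact hAjp h
    · exact hApx h
end

section
/- Let D be a dendrite and T ⊆ D a subcontinuum that is the union of finitely many arcs γ_{ij} joining points A_1,...,A_n. If a point p ∈ T satisfies γ_{j₁ i} ∩ γ_{j₂ i} = {p} for some arcs γ_{j₁ i}, γ_{j₂ i} ⊆ T with p = A_i an endpoint of both, then p is a cut point of T. -/
/-!
Write `q₁ = A j₁`, `q₂ = A j₂`. The arcs from `q₁` and from `q₂` to `p` meet only in `p`, so their
union is an arc and, by uniqueness, `p ∈ arc q₂ q₁`. Let `U` be the set of points `x` with
`p ∉ arc x q₁`. Since `arc x z ⊆ arc x y ∪ arc y z`, both `U` and its complement are unions of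
classes of the equivalence relation `p ∉ arc x y` on points other than `p`. An arc missing `p`,
and each of the two halves of an arc through `p` minus `p`, lies in one class; hence
`T ∩ (U ∪ {p})` and `T ∩ (Uᶜ ∪ {p})` are closed. They cover `T`, meet only in `p`, and contain `q₁` and `q₂`
respectively.
-/

open unitInterval

open Set

namespace IsArc

variable {X : Type*} [TopologicalSpace X] {A₁ A₂ : Set X} {a b c : X}

theorem symm (h : IsArc A₁ a b) : IsArc A₁ b a := by
  obtain ⟨φ, hc, hi, hr, h0, h1⟩ := h
  exact ⟨φ ∘ σ, hc.comp continuous_symm, hi.comp symm_bijective.injective,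
    by rw [symm_bijective.surjective.range_comp, hr], by simp [h1], by simp [h0]⟩

theorem image_uIcc {φ : I → X} (hc : Continuous φ) (hi : Function.Injective φ) {s t : I}
    (hst : s ≠ t) : IsArc (φ '' uIcc s t) (φ s) (φ t) := by
  have hinj : Function.Injective (Icc.convexComb s t) := by
    intro u v huv
    have : ((u : ℝ) - v) * ((t : ℝ) - s) = 0 := by
      have := congrArg Subtype.val huv
      simp only [Icc.coe_convexComb] at this
      linarith
    have hts : (t : ℝ) - s ≠ 0 := sub_ne_zero.mpr fun e => hst (Subtype.ext e).symm
    exact Subtype.ext (sub_eq_zero.mp ((mul_eq_zero.mp this).resolve_right hts))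
  exact ⟨φ ∘ Icc.convexComb s t, hc.comp (Icc.continuous_convexComb s t), hi.comp hinj,
    by rw [range_comp, Path.range_subpathAux], by simp, by simp⟩

theorem union (h₁ : IsArc A₁ a b) (h₂ : IsArc A₂ b c) (hb : A₁ ∩ A₂ ⊆ {b}) :
    IsArc (A₁ ∪ A₂) a c := by
  obtain ⟨φ₁, hc₁, hi₁, rfl, h10, h11⟩ := h₁
  obtain ⟨φ₂, hc₂, hi₂, rfl, h20, h21⟩ := h₂
  let γ : Path a c := Path.trans ⟨⟨φ₁, hc₁⟩, h10, h11⟩ ⟨⟨φ₂, hc₂⟩, h20, h21⟩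
  have hmeet : ∀ u v, φ₁ u = φ₂ v → v = 0 := fun u v huv => hi₂ <| by
    rw [h20, ← huv]; exact hb ⟨mem_range_self u, huv ▸ mem_range_self v⟩
  refine ⟨γ, γ.continuous, ?_, Path.trans_range _ _, γ.source, γ.target⟩
  intro u v huv
  simp only [γ, Path.trans_apply] at huv
  split_ifs at huv with hu hv hv
  · have := congrArg Subtype.val (hi₁ huv)
    exact Subtype.ext (by simp only at this; linarith)
  · have := congrArg Subtype.val (hmeet _ _ huv)
    exact absurd (by simp only [Icc.coe_zero] at this; linarith) hv
  · have := congrArg Subtype.val (hmeet _ _ huv.symm)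
    exact absurd (by simp only [Icc.coe_zero] at this; linarith) hu
  · have := congrArg Subtype.val (hi₂ huv)
    exact Subtype.ext (by simp only at this; linarith)

end IsArc

/-- Either `U` meets `J \ {p}`, and then `J ∩ insert p U = J`, or `J ∩ insert p U ⊆ {p}`. -/
theorem isClosed_inter_insert_of_forall {X : Type*} [TopologicalSpace X] [T1Space X]
    {r : X → X → Prop} {U J : Set X} {p : X} (hU : ∀ x y, r x y → x ∈ U → y ∈ U)
    (hJ : IsClosed J) (hJr : ∀ x ∈ J, ∀ y ∈ J, x ≠ p → y ≠ p → r x y) :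
    IsClosed (J ∩ insert p U) := by
  by_cases hJU : ∃ x ∈ J, x ≠ p ∧ x ∈ U
  · obtain ⟨x, hxJ, hxp, hxU⟩ := hJU
    convert hJ using 1
    refine inter_eq_left.mpr fun y hy => ?_
    obtain rfl | hyp := eq_or_ne y p
    · exact mem_insert _ _
    · exact mem_insert_of_mem _ (hU x y (hJr x hxJ y hy hxp hyp) hxU)
  · push Not at hJU
    refine Subsingleton.isClosed ((subsingleton_singleton (a := p)).anti fun z ⟨hzJ, hz⟩ => ?_)
    exact hz.elim id fun hzU => by_contra fun hzp => hJU z hzJ hzp hzU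

theorem not_isPreconnected_diff_singleton {X : Type*} [TopologicalSpace X] {T U : Set X}
    {p x y : X} (hU : IsClosed (T ∩ insert p U)) (hUc : IsClosed (T ∩ insert p Uᶜ))
    (hx : x ∈ T \ {p}) (hxU : x ∈ U) (hy : y ∈ T \ {p}) (hyU : y ∉ U) :
    ¬ IsPreconnected (T \ {p}) := by
  rw [isPreconnected_closed_iff]
  push Not
  refine ⟨_, _, hU, hUc, ?_, ⟨x, hx, hx.1, .inr hxU⟩, ⟨y, hy, hy.1, .inr hyU⟩, ?_⟩
  · rintro z ⟨hzT, -⟩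
    by_cases hz : z ∈ U
    exacts [Or.inl ⟨hzT, Or.inr hz⟩, Or.inr ⟨hzT, Or.inr hz⟩]
  · refine eq_empty_of_forall_notMem ?_
    rintro z ⟨⟨-, hzp⟩, ⟨-, hzU⟩, -, hzU'⟩
    exact hzU'.resolve_left hzp (hzU.resolve_left hzp)

structure UniqueArcs {X : Type*} [TopologicalSpace X] (arc : X → X → Set X) : Prop where
  isArc : ∀ a b, a ≠ b → IsArc (arc a b) a b
  eq_of_isArc : ∀ a b (A : Set X), a ≠ b → IsArc A a b → A = arc a b
  arc_self : ∀ a, arc a a = {a}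

namespace UniqueArcs

variable {X : Type*} [TopologicalSpace X] {arc : X → X → Set X}

theorem left_mem (h : UniqueArcs arc) (a b : X) : a ∈ arc a b := by
  obtain rfl | hab := eq_or_ne a b
  · simp [h.arc_self]
  · obtain ⟨φ, -, -, hr, h0, -⟩ := h.isArc a b hab
    exact hr ▸ h0 ▸ mem_range_self 0

theorem comm (h : UniqueArcs arc) (a b : X) : arc a b = arc b a := by
  obtain rfl | hab := eq_or_ne a b
  · rfl
  · exact h.eq_of_isArc b a _ hab.symm (h.isArc a b hab).symm

theorem right_mem (h : UniqueArcs arc) (a b : X) : b ∈ arc a b :=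
  h.comm b a ▸ h.left_mem b a

theorem isClosed [T2Space X] (h : UniqueArcs arc) (a b : X) : IsClosed (arc a b) := by
  obtain rfl | hab := eq_or_ne a b
  · rw [h.arc_self]
    exact isClosed_singleton
  · obtain ⟨φ, hc, -, hr, -⟩ := h.isArc a b hab
    exact hr ▸ (isCompact_range hc).isClosed

theorem eq_image_uIcc (h : UniqueArcs arc) {φ : I → X} (hc : Continuous φ)
    (hi : Function.Injective φ) (s t : I) : arc (φ s) (φ t) = φ '' uIcc s t := by
  obtain rfl | hst := eq_or_ne s t
  · simp [h.arc_self]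
  · exact (h.eq_of_isArc _ _ _ (hi.ne hst) (IsArc.image_uIcc hc hi hst)).symm

theorem subset_of_mem_of_mem (h : UniqueArcs arc) {a b x y : X} (hx : x ∈ arc a b)
    (hy : y ∈ arc a b) : arc x y ⊆ arc a b := by
  obtain rfl | hab := eq_or_ne a b
  · rw [h.arc_self] at hx hy
    rw [mem_singleton_iff.mp hx, mem_singleton_iff.mp hy]
  · obtain ⟨φ, hc, hi, hr, -⟩ := h.isArc a b hab
    obtain ⟨u, rfl⟩ := hr ▸ hx
    obtain ⟨v, rfl⟩ := hr ▸ hy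
    rw [h.eq_image_uIcc hc hi, ← hr]
    exact image_subset_range _ _

theorem eq_union_of_inter_subset (h : UniqueArcs arc) {a b c : X}
    (hb : arc a b ∩ arc b c ⊆ {b}) : arc a c = arc a b ∪ arc b c := by
  obtain rfl | hab := eq_or_ne a b
  · rw [h.arc_self, singleton_union, insert_eq_of_mem (h.left_mem _ _)]
  obtain rfl | hbc := eq_or_ne b c
  · rw [h.arc_self, union_singleton, insert_eq_of_mem (h.right_mem _ _)]
  have hac : a ≠ c := by
    rintro rfl
    exact hab (hb ⟨h.left_mem a b, h.right_mem b a⟩)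
  exact (h.eq_of_isArc a c _ hac ((h.isArc a b hab).union (h.isArc b c hbc) hb)).symm

/-- Follow `arc y z` from `y` up to the last point `m` where it meets `arc x y`; then
`arc x m ∪ arc m z` is an arc from `x` to `z`. -/
theorem subset_union [T2Space X] (h : UniqueArcs arc) (x y z : X) :
    arc x z ⊆ arc x y ∪ arc y z := by
  obtain rfl | hyz := eq_or_ne y z
  · exact subset_union_left
  obtain ⟨ψ, hc, hi, hr, h0, h1⟩ := h.isArc y z hyz
  obtain ⟨t, ht, htmax⟩ : ∃ t, IsGreatest (ψ ⁻¹' arc x y) t :=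
    ((h.isClosed x y).preimage hc).isCompact.exists_isGreatest ⟨0, by simp [h0, h.right_mem]⟩
  have hxm : arc x (ψ t) ⊆ arc x y := h.subset_of_mem_of_mem (h.left_mem x y) ht
  have hmz : arc (ψ t) z = ψ '' Icc t 1 := by
    rw [← h1, h.eq_image_uIcc hc hi, uIcc_of_le le_one']
  have hmeet : arc x (ψ t) ∩ arc (ψ t) z ⊆ {ψ t} := by
    rintro _ ⟨hw, hw'⟩
    rw [hmz] at hw'
    obtain ⟨r, hr, rfl⟩ := hw'
    rw [le_antisymm (htmax (hxm hw)) hr.1, mem_singleton_iff]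
  rw [h.eq_union_of_inter_subset hmeet, hmz, ← hr]
  exact union_subset_union hxm (image_subset_range _ _)

theorem notMem_arc_iff_of_notMem [T2Space X] (h : UniqueArcs arc) {p x y : X}
    (hxy : p ∉ arc x y) (q : X) : p ∉ arc x q ↔ p ∉ arc y q :=
  ⟨fun hx hy => (h.subset_union y x q hy).elim (h.comm x y ▸ hxy) hx,
    fun hy hx => (h.subset_union x y q hx).elim hxy hy⟩

theorem right_notMem_of_mem (h : UniqueArcs arc) {a b x y : X} (hx : x ∈ arc a b)
    (hy : y ∈ arc a b) (hxb : x ≠ b) (hyb : y ≠ b) : b ∉ arc x y := by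
  obtain rfl | hab := eq_or_ne a b
  · exact absurd (mem_singleton_iff.mp (h.arc_self a ▸ hx)) hxb
  obtain ⟨φ, hc, hi, hr, -, rfl⟩ := h.isArc a b hab
  obtain ⟨u, rfl⟩ := hr ▸ hx
  obtain ⟨v, rfl⟩ := hr ▸ hy
  rw [h.eq_image_uIcc hc hi, hi.mem_set_image, mem_uIcc]
  rintro (⟨-, hv⟩ | ⟨-, hu⟩)
  · exact hyb (congrArg φ (le_antisymm le_one' hv))
  · exact hxb (congrArg φ (le_antisymm le_one' hu))

/-- Each arc through `p` splits at `p` into two subarcs, neither of which joins two of its own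
points through `p`. -/
theorem isClosed_arc_inter_insert [T2Space X] (h : UniqueArcs arc) {p : X} {U : Set X}
    (hU : ∀ x y, p ∉ arc x y → x ∈ U → y ∈ U) (a b : X) : IsClosed (arc a b ∩ insert p U) := by
  by_cases hp : p ∈ arc a b
  · have hsplit : arc a b = arc a p ∪ arc p b :=
      (h.subset_union a p b).antisymm (union_subset
        (h.subset_of_mem_of_mem (h.left_mem a b) hp)
        (h.subset_of_mem_of_mem hp (h.right_mem a b)))
    rw [hsplit, union_inter_distrib_right]
    refine (isClosed_inter_insert_of_forall hU (h.isClosed a p)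
      fun x hx y hy hxp hyp => h.right_notMem_of_mem hx hy hxp hyp).union
      (isClosed_inter_insert_of_forall hU (h.isClosed p b) fun x hx y hy hxp hyp => ?_)
    rw [h.comm p b] at hx hy
    exact h.right_notMem_of_mem hx hy hxp hyp
  · exact isClosed_inter_insert_of_forall hU (h.isClosed a b)
      fun x hx y hy _ _ hpxy => hp (h.subset_of_mem_of_mem hx hy hpxy)

theorem isClosed_iUnion_arc_inter_insert [T2Space X] (h : UniqueArcs arc) {p : X} {U : Set X}
    (hU : ∀ x y, p ∉ arc x y → x ∈ U → y ∈ U) {ι : Type*} [Finite ι] (A : ι → X) :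
    IsClosed ((⋃ i, ⋃ j, arc (A i) (A j)) ∩ insert p U) := by
  simp only [iUnion_inter]
  exact isClosed_iUnion_of_finite fun i => isClosed_iUnion_of_finite fun j =>
    h.isClosed_arc_inter_insert hU _ _

end UniqueArcs

theorem stmt16_general {D : Type*} [MetricSpace D]
    (arc : D → D → Set D)
    (harc : ∀ a b : D, a ≠ b → IsArc (arc a b) a b)
    (harc_uniq : ∀ (a b : D) (A : Set D), a ≠ b → IsArc A a b → A = arc a b)
    (harc_refl : ∀ a : D, arc a a = {a})
    (n : ℕ) (A : Fin n → D)
    (T : Set D) (hT : T = ⋃ (i : Fin n), ⋃ (j : Fin n), arc (A i) (A j))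
    (i j₁ j₂ : Fin n) (hj₁ : A j₁ ≠ A i) (hj₂ : A j₂ ≠ A i)
    (p : D) (hp : p = A i)
    (hmeet : arc (A j₁) (A i) ∩ arc (A j₂) (A i) = {p}) :
    ¬ IsPreconnected (T \ {p}) := by
  have h : UniqueArcs arc := ⟨harc, harc_uniq, harc_refl⟩
  subst hp hT
  have hsep : A i ∈ arc (A j₂) (A j₁) := by
    rw [h.eq_union_of_inter_subset (b := A i) (by rw [h.comm (A i) (A j₁), inter_comm, hmeet])]
    exact .inl (h.right_mem _ _)
  have hAT : ∀ k, A k ∈ ⋃ (i : Fin n), ⋃ (j : Fin n), arc (A i) (A j) :=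
    fun k => mem_iUnion₂.mpr ⟨k, k, h.left_mem _ _⟩
  let U := {x | A i ∉ arc x (A j₁)}
  have hU : ∀ x y, A i ∉ arc x y → x ∈ U → y ∈ U :=
    fun x y hxy => (h.notMem_arc_iff_of_notMem hxy _).mp
  have hUc : ∀ x y, A i ∉ arc x y → x ∈ Uᶜ → y ∈ Uᶜ :=
    fun x y hxy => mt (h.notMem_arc_iff_of_notMem hxy _).mpr
  have hq₁ : A j₁ ∈ U := by simpa [U, h.arc_self] using hj₁.symm
  exact not_isPreconnected_diff_singleton (h.isClosed_iUnion_arc_inter_insert hU A)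
    (h.isClosed_iUnion_arc_inter_insert hUc A) ⟨hAT j₁, hj₁⟩ hq₁ ⟨hAT j₂, hj₂⟩ (not_not.mpr hsep)

/-- Let `T` be a subcontinuum of a dendrite `D` which is the union of
the arcs `γ_{ij}` joining points `A_1,...,A_n`. If `p = A_i` is a common endpoint of
two (nondegenerate) arcs `γ_{j₁ i}`, `γ_{j₂ i} ⊆ T` with
`γ_{j₁ i} ∩ γ_{j₂ i} = {p}`, then `p` is a cut point of `T`. -/
theorem stmt16 {D : Type*} [MetricSpace D] [CompactSpace D] [ConnectedSpace D]
    [LocallyConnectedSpace D]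
    (hnocircle : ¬ ∃ f : Circle → D, Continuous f ∧ Function.Injective f)
    (arc : D → D → Set D)
    (harc : ∀ a b : D, a ≠ b → IsArc (arc a b) a b)
    (harc_uniq : ∀ (a b : D) (A : Set D), a ≠ b → IsArc A a b → A = arc a b)
    (harc_refl : ∀ a : D, arc a a = {a})
    (n : ℕ) (A : Fin n → D)
    (T : Set D) (hT : T = ⋃ (i : Fin n), ⋃ (j : Fin n), arc (A i) (A j))
    (i j₁ j₂ : Fin n) (hj₁ : A j₁ ≠ A i) (hj₂ : A j₂ ≠ A i)
    (p : D) (hp : p = A i) (hpT : p ∈ T)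
    (hmeet : arc (A j₁) (A i) ∩ arc (A j₂) (A i) = {p}) :
    ¬ IsPreconnected (T \ {p}) :=
  stmt16_general arc harc harc_uniq harc_refl n A T hT i j₁ j₂ hj₁ hj₂ p hp hmeet
end
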